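/- Let D be a partially ordered set with objects a, b, c such that a ≤ c and b ≤ c hold, a and b are incomparable, and for every d ≤ a the join b ∨ d exists in D. Let E be the poset extending D by adding the single relation a ≤ b (and closing under transitivity). Then the inclusion i : D → E is final: for every x ∈ E the comma poset {y ∈ D : x ≤_E y} is nonempty and connected. -/

import Mathlib

/-!
If `x ≤ a`, the join `j` of `b` and `x` lies in the comma poset of `x`, and every element of
that poset lies above `x` or above `b`, hence is joined to `j` through `x` or `b`. Otherwise
the comma poset is the principal up-set of `x` in `D`, which is connected through `x`.
-/

/-- The order relation of the poset `E` obtained from `D` by adjoining the single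
relation `a ≤ b` and closing under transitivity: `u ≤_E v` iff `u ≤ v` in `D`, or
`u ≤ a` and `b ≤ v`. -/
def leE {D : Type*} [PartialOrder D] (a b : D) (u v : D) : Prop :=
  u ≤ v ∨ (u ≤ a ∧ b ≤ v)

open Relation

section ComparableIn

variable {α : Type*} [Preorder α] {S : Set α} {u v w p : α}

def ComparableIn (S : Set α) (u v : α) : Prop :=
  (u ∈ S ∧ v ∈ S) ∧ (u ≤ v ∨ v ≤ u)

instance : Std.Symm (ComparableIn S) where
  symm _ _ h := ⟨⟨h.1.2, h.1.1⟩, h.2.symm⟩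

theorem reflTransGen_comparableIn_of_ge_of_le (hw : w ∈ S) (hu : u ∈ S) (hv : v ∈ S)
    (hwu : w ≤ u) (hwv : w ≤ v) : ReflTransGen (ComparableIn S) u v :=
  .head ⟨⟨hu, hw⟩, .inr hwu⟩ (.single ⟨⟨hw, hv⟩, .inl hwv⟩)

theorem reflTransGen_comparableIn_of_forall_reach
    (hp : ∀ y ∈ S, ReflTransGen (ComparableIn S) y p) (hu : u ∈ S) (hv : v ∈ S) :
    ReflTransGen (ComparableIn S) u v :=
  (hp u hu).trans (Std.Symm.symm _ _ (hp v hv))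

end ComparableIn

section leE

variable {D : Type*} [PartialOrder D] {a b x y : D}

theorem leE_refl (a b x : D) : leE a b x x :=
  .inl le_rfl

theorem le_of_leE_of_not_le (hxa : ¬x ≤ a) (h : leE a b x y) : x ≤ y :=
  h.resolve_right fun h' => hxa h'.1

end leE

theorem stmt19_general {D : Type*} [PartialOrder D] (a b : D)
    (hjoin : ∀ d : D, d ≤ a →
      ∃ j : D, b ≤ j ∧ d ≤ j ∧ ∀ z : D, b ≤ z → d ≤ z → j ≤ z)
    (x : D) :
    ({y : D | leE a b x y}).Nonempty ∧
      ∀ y z : D, leE a b x y → leE a b x z →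
        Relation.ReflTransGen
          (fun u v : D => (leE a b x u ∧ leE a b x v) ∧ (u ≤ v ∨ v ≤ u)) y z := by
  refine ⟨⟨x, leE_refl a b x⟩, fun y z hy hz => ?_⟩
  change ReflTransGen (ComparableIn {w | leE a b x w}) y z
  by_cases hxa : x ≤ a
  · obtain ⟨j, hbj, hxj, -⟩ := hjoin x hxa
    refine reflTransGen_comparableIn_of_forall_reach (p := j) (fun w hw => ?_) hy hz
    rcases hw with hxw | ⟨-, hbw⟩
    · exact reflTransGen_comparableIn_of_ge_of_le (leE_refl a b x) (.inl hxw) (.inl hxj) hxw hxj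
    · exact reflTransGen_comparableIn_of_ge_of_le (.inr ⟨hxa, le_rfl⟩) (.inr ⟨hxa, hbw⟩)
        (.inl hxj) hbw hbj
  · exact reflTransGen_comparableIn_of_ge_of_le (leE_refl a b x) hy hz
      (le_of_leE_of_not_le hxa hy) (le_of_leE_of_not_le hxa hz)

/-- Let `D` be a poset with elements `a, b, c` such that `a ≤ c`, `b ≤ c`, `a` and `b`
are incomparable, and for every `d ≤ a` the join `b ∨ d` exists in `D`.  Let `E` be
the poset extending `D` by the relation `a ≤ b` (closed under transitivity).  Then the
inclusion `D → E` is final: for every `x`, the comma poset `{y ∈ D : x ≤_E y}` is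
nonempty and connected (any two of its elements are joined by a zigzag of
comparabilities within it). -/
theorem stmt19 {D : Type*} [PartialOrder D] (a b c : D)
    (hac : a ≤ c) (hbc : b ≤ c) (hab : ¬a ≤ b) (hba : ¬b ≤ a)
    (hjoin : ∀ d : D, d ≤ a →
      ∃ j : D, b ≤ j ∧ d ≤ j ∧ ∀ z : D, b ≤ z → d ≤ z → j ≤ z)
    (x : D) :
    ({y : D | leE a b x y}).Nonempty ∧
      ∀ y z : D, leE a b x y → leE a b x z →
        Relation.ReflTransGen
          (fun u v : D => (leE a b x u ∧ leE a b x v) ∧ (u ≤ v ∨ v ≤ u)) y z :=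
  stmt19_general a b hjoin x
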